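/- Moment generating function bound for the largest cluster in a magnetic field (finite-graph version of Proposition 3.6 and of the key inequality in the proof of Theorem 1.3): assume V ≠ ∅; then for every h ≥ 0 and t ≥ 0, taking constant external field H ≡ h, E_{P̃_{J,h}}[ exp( t · max_{C a cluster of ω̃} |C| ) ] ≤ 2 · E_{P_{J,0}}[ exp( (t+h) · ∑_{v∈V} σ_v ) ]. -/

import Mathlib

open scoped Classical

namespace FK

variable {V : Type*} [Fintype V] [DecidableEq V]

/-- Internal bond configurations on the edge set `E`. -/
abbrev Config (E : Finset (Sym2 V)) : Type _ := {e : Sym2 V // e ∈ E} → Bool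

/-- Full bond configurations: internal edges together with the ghost edges
(one for each vertex). -/
abbrev GConfig (E : Finset (Sym2 V)) : Type _ := Config E × (V → Bool)

/-- Two vertices are adjacent if they are distinct and joined by an open internal edge. -/
def adj (E : Finset (Sym2 V)) (ω : Config E) (u v : V) : Prop :=
  u ≠ v ∧ ∃ h : s(u, v) ∈ E, ω ⟨s(u, v), h⟩ = true

/-- The same-cluster relation of an internal configuration. -/
def conn (E : Finset (Sym2 V)) (ω : Config E) (u v : V) : Prop :=
  Relation.ReflTransGen (adj E ω) u v

/-- The cluster of a vertex. -/
noncomputable def cluster (E : Finset (Sym2 V)) (ω : Config E) (v : V) : Finset V :=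
  Finset.univ.filter (fun u => conn E ω v u)

/-- The set of clusters (connected components) of an internal configuration. -/
noncomputable def clusters (E : Finset (Sym2 V)) (ω : Config E) : Finset (Finset V) :=
  Finset.univ.image (cluster E ω)

/-- Adjacency in the extended graph, where `none` is the ghost vertex `g`. -/
def adjG (E : Finset (Sym2 V)) (ω : GConfig E) : Option V → Option V → Prop
  | some u, some v => adj E ω.1 u v
  | some u, none => ω.2 u = true
  | none, some v => ω.2 v = true
  | none, none => False

/-- Connectivity in the extended graph (with the ghost vertex `none`). -/
def connG (E : Finset (Sym2 V)) (ω : GConfig E) (x y : Option V) : Prop :=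
  Relation.ReflTransGen (adjG E ω) x y

/-- Number of connected components of the extended graph not containing the ghost. -/
noncomputable def kGhost (E : Finset (Sym2 V)) (ω : GConfig E) : ℕ :=
  (((Finset.univ : Finset V).filter (fun v => ¬ connG E ω (some v) none)).image
    (fun v => Finset.univ.filter (fun u : V => connG E ω (some v) (some u)))).card

/-- The product over internal edges of the usual FK edge weights. -/
noncomputable def edgeWeight (J : Sym2 V → ℝ) (E : Finset (Sym2 V)) (ω : Config E) : ℝ :=
  ∏ e : {e : Sym2 V // e ∈ E},
    if ω e then 1 - Real.exp (-2 * J e.1) else Real.exp (-2 * J e.1)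

/-- Unnormalized FK (q = 2) weight with ghost. -/
noncomputable def fkWeight (J : Sym2 V → ℝ) (H : V → ℝ) (E : Finset (Sym2 V))
    (ω : GConfig E) : ℝ :=
  2 ^ kGhost E ω * edgeWeight J E ω.1 *
    ∏ v, if ω.2 v then 1 - Real.exp (-2 * H v) else Real.exp (-2 * H v)

/-- The FK (q = 2) random-cluster measure with ghost. -/
noncomputable def fkProb (J : Sym2 V → ℝ) (H : V → ℝ) (E : Finset (Sym2 V))
    (ω : GConfig E) : ℝ :=
  fkWeight J H E ω / ∑ ω' : GConfig E, fkWeight J H E ω'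

/-- The marginal of the FK measure with ghost on the internal edges. -/
noncomputable def fkMarginal (J : Sym2 V → ℝ) (H : V → ℝ) (E : Finset (Sym2 V))
    (ωi : Config E) : ℝ :=
  ∑ ωg : V → Bool, fkProb J H E (ωi, ωg)

/-- Unnormalized zero-field random-cluster (q = 2) weight. -/
noncomputable def rcWeight (J : Sym2 V → ℝ) (E : Finset (Sym2 V)) (ω : Config E) : ℝ :=
  2 ^ (clusters E ω).card * edgeWeight J E ω

/-- The zero-field random-cluster (q = 2) measure. -/
noncomputable def rcProb (J : Sym2 V → ℝ) (E : Finset (Sym2 V)) (ω : Config E) : ℝ :=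
  rcWeight J E ω / ∑ ω' : Config E, rcWeight J E ω'

/-- The spin value (±1) of a Boolean. -/
def spin (b : Bool) : ℝ := if b then 1 else -1

/-- The product of the two spins at the endpoints of an (unordered) edge. -/
def pairSpin (σ : V → Bool) : Sym2 V → ℝ :=
  Sym2.lift ⟨fun u v => spin (σ u) * spin (σ v), fun u v => mul_comm _ _⟩

/-- Unnormalized Ising weight. -/
noncomputable def isingWeight (J : Sym2 V → ℝ) (H : V → ℝ) (E : Finset (Sym2 V))
    (σ : V → Bool) : ℝ :=
  Real.exp ((∑ e ∈ E, J e * pairSpin σ e) + ∑ v, H v * spin (σ v))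

/-- The Ising Gibbs measure. -/
noncomputable def isingProb (J : Sym2 V → ℝ) (H : V → ℝ) (E : Finset (Sym2 V))
    (σ : V → Bool) : ℝ :=
  isingWeight J H E σ / ∑ σ' : V → Bool, isingWeight J H E σ'

/-- Unnormalized Edwards–Sokal weight on pairs (spin configuration, bond configuration
with ghost); the ghost spin is `+1` (i.e. `true`). -/
noncomputable def esWeight (J : Sym2 V → ℝ) (H : V → ℝ) (E : Finset (Sym2 V))
    (p : (V → Bool) × GConfig E) : ℝ :=
  (∏ e : {e : Sym2 V // e ∈ E},
      if p.2.1 e then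
        (if ∀ u ∈ e.1, ∀ v ∈ e.1, p.1 u = p.1 v then 1 - Real.exp (-2 * J e.1) else 0)
      else Real.exp (-2 * J e.1))
  * ∏ v, if p.2.2 v then (if p.1 v = true then 1 - Real.exp (-2 * H v) else 0)
         else Real.exp (-2 * H v)

/-- The Edwards–Sokal coupling measure. -/
noncomputable def esProb (J : Sym2 V → ℝ) (H : V → ℝ) (E : Finset (Sym2 V))
    (p : (V → Bool) × GConfig E) : ℝ :=
  esWeight J H E p / ∑ p' : (V → Bool) × GConfig E, esWeight J H E p'

end FK

/-!
Couple the FK measure with ghost to the Ising model through the Edwards–Sokal weight, with the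
ghost spin fixed to `+`. For a bond configuration `ω` with `k` components avoiding the ghost, the
compatible spin configurations are exactly the `2 ^ k` choices of a sign on each such component, so
summing the coupling over spins gives the FK weight, while summing over bonds gives the Ising
weight in the field `H`.

Fix a largest cluster `C` of `ω`. At least half of the compatible configurations are `+` on `C`.
Among those, flipping every spin outside `C` and the ghost's component is an involution under which
the magnetizations of a pair add up to at least `2 |C|`, so by convexity of `exp` their average of
`exp (t M)` is at least `exp (t |C|)`. Hence `E_FK[exp (t |C_max|)] ≤ 2 E_H[exp (t M)]`. For a
constant field `h`, `E_h[exp (t M)] = E_0[exp ((t + h) M)] Z_0 / Z_h`, and `Z_0 ≤ Z_h` by the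
symmetry `σ ↦ -σ`.
-/

section General

open Finset Real

lemma Finset.decide_exists_mem_eq_true {α : Type*} {s : Finset α} {g : α → Bool} {a : α}
    (ha : a ∈ s) (hg : ∀ u ∈ s, g u = g a) : decide (∃ u ∈ s, g u = true) = g a := by
  cases h : g a
  · simp only [decide_eq_false_iff_not, not_exists, not_and]
    intro u hu
    simp [hg u hu, h]
  · exact decide_eq_true ⟨a, ha, h⟩

lemma Fintype.prod_ite_ite_zero {ι M : Type*} [Fintype ι] [CommMonoidWithZero M] (b : ι → Bool)
    (p : ι → Prop) [DecidablePred p] (f g : ι → M) :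
    ∏ i, (if b i then (if p i then f i else 0) else g i) =
      if ∀ i, b i = true → p i then ∏ i, (if b i then f i else g i) else 0 := by
  split_ifs with h
  · exact Finset.prod_congr rfl fun i _ => by by_cases hb : b i = true <;> simp [hb, h i]
  · simp only [not_forall] at h
    obtain ⟨i, hb, hp⟩ := h
    exact Finset.prod_eq_zero (mem_univ i) (by simp [hb, hp])

lemma Fintype.sum_prod_ite_bool {ι R : Type*} [Fintype ι] [DecidableEq ι] [CommSemiring R]
    (f g : ι → R) :
    ∑ x : ι → Bool, ∏ i, (if x i then f i else g i) = ∏ i, (f i + g i) :=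
  (Fintype.prod_sum fun i (b : Bool) => if b then f i else g i).symm.trans (by simp)

lemma Real.two_mul_exp_le_exp_add_exp {a b c : ℝ} (h : 2 * c ≤ a + b) :
    2 * exp c ≤ exp a + exp b :=
  calc 2 * exp c ≤ 2 * exp (a / 2) * exp (b / 2) := by
        rw [mul_assoc, ← exp_add]
        gcongr
        linarith
    _ ≤ exp (a / 2) ^ 2 + exp (b / 2) ^ 2 := two_mul_le_add_sq _ _
    _ = exp a + exp b := by rw [← exp_nat_mul, ← exp_nat_mul]; ring_nf

/-- Pair `x` with `f x` and use the convexity of `exp`. -/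
lemma Finset.sum_mul_exp_le_of_involution {α : Type*} {s : Finset α} (f : α → α)
    (hf : ∀ x ∈ s, f x ∈ s) (hff : ∀ x ∈ s, f (f x) = x) {w g : α → ℝ}
    (hw : ∀ x ∈ s, 0 ≤ w x) (hwf : ∀ x ∈ s, w (f x) = w x) {c : ℝ}
    (hg : ∀ x ∈ s, 2 * c ≤ g x + g (f x)) :
    (∑ x ∈ s, w x) * exp c ≤ ∑ x ∈ s, w x * exp (g x) := by
  have hswap : ∑ x ∈ s, w x * exp (g (f x)) = ∑ x ∈ s, w x * exp (g x) :=
    sum_nbij' f f hf hf hff hff fun x hx => by rw [hwf x hx]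
  have h2 : 2 * ((∑ x ∈ s, w x) * exp c) ≤ 2 * ∑ x ∈ s, w x * exp (g x) :=
    calc 2 * ((∑ x ∈ s, w x) * exp c) = ∑ x ∈ s, w x * (2 * exp c) := by
          rw [sum_mul, mul_sum]
          exact sum_congr rfl fun _ _ => by ring
      _ ≤ ∑ x ∈ s, w x * (exp (g x) + exp (g (f x))) :=
          sum_le_sum fun x hx => mul_le_mul_of_nonneg_left
            (two_mul_exp_le_exp_add_exp (hg x hx)) (hw x hx)
      _ = 2 * ∑ x ∈ s, w x * exp (g x) := by
          simp only [mul_add, sum_add_distrib, hswap]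
          ring
  linarith

end General

namespace FK

open Finset Real

variable {V : Type*} {E : Finset (Sym2 V)}

section Connectivity

lemma adj_symm {ω : Config E} {u v : V} (h : adj E ω u v) : adj E ω v u := by
  obtain ⟨hne, he, hω⟩ := h
  refine ⟨hne.symm, ?_⟩
  rw [Sym2.eq_swap]
  exact ⟨he, hω⟩

lemma conn_symm {ω : Config E} {u v : V} (h : conn E ω u v) : conn E ω v u :=
  haveI : Std.Symm (adj E ω) := ⟨fun _ _ => adj_symm⟩
  Relation.ReflTransGen.stdSymm.symm _ _ h

lemma adjG_symm {ω : GConfig E} : ∀ {x y : Option V}, adjG E ω x y → adjG E ω y x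
  | some _, some _, h => adj_symm h
  | some _, none, h => h
  | none, some _, h => h

lemma connG_symm {ω : GConfig E} {x y : Option V} (h : connG E ω x y) : connG E ω y x :=
  haveI : Std.Symm (adjG E ω) := ⟨fun _ _ => adjG_symm⟩
  Relation.ReflTransGen.stdSymm.symm _ _ h

lemma connG_of_conn {ω : GConfig E} {u v : V} (h : conn E ω.1 u v) :
    connG E ω (some u) (some v) :=
  Relation.ReflTransGen.lift (r := adj E ω.1) (p := adjG E ω) some (fun _ _ huv => huv) _ _ h

lemma connG_ghost_iff_of_connG {ω : GConfig E} {x y : Option V} (h : connG E ω x y) :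
    connG E ω x none ↔ connG E ω y none :=
  ⟨(connG_symm h).trans, h.trans⟩

lemma mem_cluster [Fintype V] {ω : Config E} {u v : V} : u ∈ cluster E ω v ↔ conn E ω v u := by
  simp [cluster]

lemma mem_cluster_iff_of_adj [Fintype V] {ω : Config E} {w u v : V} (h : adj E ω u v) :
    u ∈ cluster E ω w ↔ v ∈ cluster E ω w := by
  simp only [mem_cluster]
  exact ⟨fun hu => hu.tail h, fun hv => hv.tail (adj_symm h)⟩

end Connectivity

section Compatible

/-- The spin configurations on which the Edwards–Sokal weight of `ω` does not vanish. -/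
def Compatible (ω : GConfig E) (σ : V → Bool) : Prop :=
  (∀ u v, adj E ω.1 u v → σ u = σ v) ∧ ∀ v, ω.2 v = true → σ v = true

lemma forall_open_edge_iff {ω : Config E} {σ : V → Bool} :
    (∀ e : {e // e ∈ E}, ω e = true → ∀ u ∈ e.1, ∀ v ∈ e.1, σ u = σ v) ↔
      ∀ u v, adj E ω u v → σ u = σ v := by
  constructor
  · rintro h u v ⟨-, he, hω⟩
    exact h _ hω u (Sym2.mem_mk_left u v) v (Sym2.mem_mk_right u v)
  · rintro h ⟨e, he⟩ hω u hu v hv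
    obtain rfl | huv := eq_or_ne u v
    · rfl
    obtain rfl : e = s(u, v) := (Sym2.mem_and_mem_iff huv).1 ⟨hu, hv⟩
    exact h u v ⟨huv, he, hω⟩

/-- `x.elim true σ` is the spin of `x`, the ghost `none` having spin `+`. -/
lemma Compatible.elim_eq_of_connG {ω : GConfig E} {σ : V → Bool} (hσ : Compatible ω σ)
    {x y : Option V} (h : connG E ω x y) : x.elim true σ = y.elim true σ := by
  induction h with
  | refl => rfl
  | @tail y z _ hyz ih =>
    rw [ih]
    match y, z, hyz with
    | some _, some _, hyz => exact hσ.1 _ _ hyz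
    | some _, none, hyz => exact hσ.2 _ hyz
    | none, some _, hyz => exact (hσ.2 _ hyz).symm

lemma Compatible.eq_of_connG {ω : GConfig E} {σ : V → Bool} (hσ : Compatible ω σ) {u v : V}
    (h : connG E ω (some u) (some v)) : σ u = σ v :=
  hσ.elim_eq_of_connG h

lemma Compatible.eq_true_of_connG {ω : GConfig E} {σ : V → Bool} (hσ : Compatible ω σ) {v : V}
    (h : connG E ω (some v) none) : σ v = true :=
  hσ.elim_eq_of_connG h

lemma Compatible.eq_of_mem_cluster [Fintype V] {ω : GConfig E} {σ : V → Bool}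
    (hσ : Compatible ω σ) {w u v : V} (hu : u ∈ cluster E ω.1 w) (hv : v ∈ cluster E ω.1 w) :
    σ u = σ v :=
  hσ.eq_of_connG (connG_of_conn ((conn_symm (mem_cluster.1 hu)).trans (mem_cluster.1 hv)))

noncomputable def flipOn (S : Finset V) (σ : V → Bool) (v : V) : Bool :=
  if v ∈ S then !σ v else σ v

lemma flipOn_flipOn (S : Finset V) (σ : V → Bool) : flipOn S (flipOn S σ) = σ := by
  funext v
  by_cases hv : v ∈ S <;> simp [flipOn, hv]

lemma spin_add_spin_flipOn (S : Finset V) (σ : V → Bool) (v : V) :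
    spin (σ v) + spin (flipOn S σ v) = if v ∈ S then 0 else 2 * spin (σ v) := by
  unfold flipOn
  split_ifs <;> cases σ v <;> norm_num [spin]

lemma Compatible.flipOn {ω : GConfig E} {σ : V → Bool} (hσ : Compatible ω σ) {S : Finset V}
    (hS : ∀ u v, adj E ω.1 u v → (u ∈ S ↔ v ∈ S)) (hg : ∀ v ∈ S, ω.2 v = false) :
    Compatible ω (flipOn S σ) := by
  refine ⟨fun u v huv => ?_, fun v hv => ?_⟩
  · simp only [FK.flipOn, hS u v huv, hσ.1 u v huv]
  · have hvS : v ∉ S := fun hvS => by simp [hg v hvS] at hv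
    simp [FK.flipOn, hvS, hσ.2 v hv]

lemma two_mul_card_le_sum_spin_add_sum_spin_flipOn [Fintype V] {C S : Finset V} {σ : V → Bool}
    (hCS : ∀ v ∈ C, v ∉ S) (hσ : ∀ v ∉ S, σ v = true) :
    2 * (#C : ℝ) ≤ ∑ v, spin (σ v) + ∑ v, spin (flipOn S σ v) := by
  rw [← sum_add_distrib]
  calc 2 * (#C : ℝ) = ∑ v, if v ∈ C then (2 : ℝ) else 0 := by
        rw [sum_ite_mem, univ_inter, sum_const, nsmul_eq_mul, mul_comm]
    _ ≤ _ := sum_le_sum fun v _ => by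
        rw [spin_add_spin_flipOn]
        by_cases hvS : v ∈ S
        · have hvC : v ∉ C := fun hvC => hCS v hvC hvS
          simp [hvS, hvC]
        · simp only [hvS, if_false, hσ v hvS, spin]
          split_ifs <;> norm_num

end Compatible

section Counting

variable [Fintype V]

noncomputable def comp (ω : GConfig E) (v : V) : Finset V :=
  univ.filter fun u => connG E ω (some v) (some u)

lemma mem_comp {ω : GConfig E} {u v : V} : u ∈ comp ω v ↔ connG E ω (some v) (some u) := by
  simp [comp]

lemma comp_eq_of_connG {ω : GConfig E} {u v : V} (h : connG E ω (some u) (some v)) :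
    comp ω u = comp ω v := by
  ext w
  simp only [mem_comp]
  exact ⟨(connG_symm h).trans, h.trans⟩

variable [DecidableEq V]

noncomputable def compatSpins (ω : GConfig E) : Finset (V → Bool) :=
  univ.filter (Compatible ω)

noncomputable def freeComps (ω : GConfig E) : Finset (Finset V) :=
  (univ.filter fun v => ¬ connG E ω (some v) none).image (comp ω)

lemma kGhost_eq_card_freeComps (ω : GConfig E) : kGhost E ω = #(freeComps ω) := rfl

lemma comp_mem_freeComps {ω : GConfig E} {v : V} (hv : ¬ connG E ω (some v) none) :
    comp ω v ∈ freeComps ω :=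
  mem_image_of_mem _ (mem_filter.2 ⟨mem_univ v, hv⟩)

noncomputable def spinOfComps (ω : GConfig E) (f : {C // C ∈ freeComps ω} → Bool) (v : V) :
    Bool :=
  if hv : connG E ω (some v) none then true else f ⟨comp ω v, comp_mem_freeComps hv⟩

lemma spinOfComps_eq_of_connG {ω : GConfig E} (f : {C // C ∈ freeComps ω} → Bool) {u v : V}
    (h : connG E ω (some u) (some v)) : spinOfComps ω f u = spinOfComps ω f v := by
  have hg := connG_ghost_iff_of_connG h
  by_cases hu : connG E ω (some u) none
  · rw [spinOfComps, spinOfComps, dif_pos hu, dif_pos (hg.1 hu)]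
  · rw [spinOfComps, spinOfComps, dif_neg hu, dif_neg (mt hg.2 hu)]
    simp only [comp_eq_of_connG h]

lemma compatible_spinOfComps (ω : GConfig E) (f : {C // C ∈ freeComps ω} → Bool) :
    Compatible ω (spinOfComps ω f) :=
  ⟨fun _ _ h => spinOfComps_eq_of_connG f (connG_of_conn (.single h)),
    fun _ hv => by rw [spinOfComps, dif_pos (.single hv)]⟩

noncomputable def compatibleEquiv (ω : GConfig E) :
    {σ // Compatible ω σ} ≃ ({C // C ∈ freeComps ω} → Bool) where
  toFun σ C := decide (∃ v ∈ C.1, σ.1 v = true)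
  invFun f := ⟨spinOfComps ω f, compatible_spinOfComps ω f⟩
  left_inv := by
    rintro ⟨σ, hσ⟩
    ext v
    dsimp only
    by_cases hv : connG E ω (some v) none
    · simp [spinOfComps, hv, hσ.eq_true_of_connG hv]
    · rw [spinOfComps, dif_neg hv]
      exact decide_exists_mem_eq_true (mem_comp.2 .refl)
        fun u hu => (hσ.eq_of_connG (mem_comp.1 hu)).symm
  right_inv := by
    rintro f
    funext ⟨C, hC⟩
    obtain ⟨w, hw, rfl⟩ := mem_image.1 hC
    have hval : spinOfComps ω f w = f ⟨comp ω w, hC⟩ := by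
      rw [spinOfComps, dif_neg (mem_filter.1 hw).2]
    rw [← hval]
    exact decide_exists_mem_eq_true (mem_comp.2 .refl)
      fun u hu => (spinOfComps_eq_of_connG f (mem_comp.1 hu)).symm

lemma card_compatSpins (ω : GConfig E) : #(compatSpins ω) = 2 ^ kGhost E ω := by
  rw [compatSpins, ← Fintype.card_subtype, Fintype.card_congr (compatibleEquiv ω),
    Fintype.card_fun, Fintype.card_bool, Fintype.card_coe, kGhost_eq_card_freeComps]

noncomputable def plusSpins (ω : GConfig E) (C : Finset V) : Finset (V → Bool) :=
  (compatSpins ω).filter fun σ => ∀ v ∈ C, σ v = true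

lemma mem_plusSpins {ω : GConfig E} {C : Finset V} {σ : V → Bool} :
    σ ∈ plusSpins ω C ↔ Compatible ω σ ∧ ∀ v ∈ C, σ v = true := by
  simp [plusSpins, compatSpins]

/-- A compatible configuration that is not `+` on the cluster is `-` on all of it, and flipping
the cluster makes it `+`. -/
lemma pow_kGhost_le_two_mul_card_plusSpins (ω : GConfig E) (v₀ : V) :
    2 ^ kGhost E ω ≤ 2 * #(plusSpins ω (cluster E ω.1 v₀)) := by
  set C := cluster E ω.1 v₀
  set minus := (compatSpins ω).filter fun σ => ¬ ∀ v ∈ C, σ v = true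
  have hflip : ∀ σ ∈ minus, flipOn C σ ∈ plusSpins ω C := by
    intro σ hσ
    simp only [minus, compatSpins, mem_filter, mem_univ, true_and, not_forall] at hσ
    obtain ⟨hσ, w, hw, hσw⟩ := hσ
    have hneg : ∀ v ∈ C, σ v = false := fun v hv =>
      (hσ.eq_of_mem_cluster hv hw).trans (by simpa using hσw)
    have hg : ∀ v ∈ C, ω.2 v = false := fun v hv => by
      by_contra h
      simpa [hneg v hv] using hσ.2 v (by simpa using h)
    exact mem_plusSpins.2 ⟨hσ.flipOn (fun _ _ => mem_cluster_iff_of_adj) hg,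
      fun v hv => by simp [FK.flipOn, hv, hneg v hv]⟩
  have hminus : #minus ≤ #(plusSpins ω C) :=
    card_le_card_of_injOn (flipOn C) hflip fun σ _ τ _ h => by
      rw [← flipOn_flipOn C σ, h, flipOn_flipOn]
  rw [← card_compatSpins, ← card_filter_add_card_filter_not (fun σ => ∀ v ∈ C, σ v = true)]
  exact (Nat.add_le_add_left hminus _).trans (by rw [plusSpins]; omega)

lemma card_mul_exp_le_sum_exp_plusSpins (ω : GConfig E) (v₀ : V) {t : ℝ} (ht : 0 ≤ t) :
    #(plusSpins ω (cluster E ω.1 v₀)) * exp (t * #(cluster E ω.1 v₀)) ≤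
      ∑ σ ∈ plusSpins ω (cluster E ω.1 v₀), exp (t * ∑ v, spin (σ v)) := by
  set C := cluster E ω.1 v₀
  set S := univ.filter fun v => v ∉ C ∧ ¬ connG E ω (some v) none
  have hS : ∀ u v, adj E ω.1 u v → (u ∈ S ↔ v ∈ S) := fun u v h => by
    have hC : u ∈ C ↔ v ∈ C := mem_cluster_iff_of_adj h
    simp only [S, mem_filter, mem_univ, true_and, hC,
      connG_ghost_iff_of_connG (connG_of_conn (.single h))]
  have hg : ∀ v ∈ S, ω.2 v = false := fun v hv => by
    simp only [S, mem_filter, mem_univ, true_and] at hv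
    exact Bool.eq_false_iff.2 fun h => hv.2 (.single h)
  have hCS : ∀ v ∈ C, v ∉ S := fun v hv => by simp [S, hv]
  have hplus : ∀ σ ∈ plusSpins ω C, ∀ v ∉ S, σ v = true := by
    intro σ hσ v hv
    rw [mem_plusSpins] at hσ
    simp only [S, mem_filter, mem_univ, true_and, not_and, not_not] at hv
    by_cases hvC : v ∈ C
    · exact hσ.2 v hvC
    · exact hσ.1.eq_true_of_connG (hv hvC)
  have hmem : ∀ σ ∈ plusSpins ω C, flipOn S σ ∈ plusSpins ω C := by
    intro σ hσ
    rw [mem_plusSpins] at hσ ⊢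
    exact ⟨hσ.1.flipOn hS hg, fun v hv => by simp [FK.flipOn, hCS v hv, hσ.2 v hv]⟩
  have hsum : ∀ σ ∈ plusSpins ω C, 2 * (t * #C) ≤
      t * ∑ v, spin (σ v) + t * ∑ v, spin (flipOn S σ v) := fun σ hσ => by
    nlinarith [two_mul_card_le_sum_spin_add_sum_spin_flipOn hCS (hplus σ hσ)]
  simpa using sum_mul_exp_le_of_involution (w := fun _ => 1) (flipOn S) hmem
    (fun σ _ => flipOn_flipOn S σ) (fun _ _ => zero_le_one) (fun _ _ => rfl) hsum

end Counting

section Weights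

variable [Fintype V]

noncomputable def ghostWeight (H : V → ℝ) (ωg : V → Bool) : ℝ :=
  ∏ v, if ωg v then 1 - exp (-2 * H v) else exp (-2 * H v)

noncomputable def bernoulliWeight (J : Sym2 V → ℝ) (H : V → ℝ) (ω : GConfig E) : ℝ :=
  edgeWeight J E ω.1 * ghostWeight H ω.2

lemma ite_one_sub_exp_nonneg {c : ℝ} (hc : 0 ≤ c) (b : Bool) :
    0 ≤ if b then 1 - exp (-2 * c) else exp (-2 * c) := by
  split_ifs
  · exact sub_nonneg.2 (exp_le_one_iff.2 (by linarith))
  · exact (exp_pos _).le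

lemma bernoulliWeight_nonneg {J : Sym2 V → ℝ} (hJ : ∀ e ∈ E, 0 ≤ J e) {H : V → ℝ}
    (hH : ∀ v, 0 ≤ H v) (ω : GConfig E) : 0 ≤ bernoulliWeight J H ω :=
  mul_nonneg (prod_nonneg fun e _ => ite_one_sub_exp_nonneg (hJ e.1 e.2) _)
    (prod_nonneg fun v _ => ite_one_sub_exp_nonneg (hH v) _)

variable [DecidableEq V]

lemma fkWeight_eq (J : Sym2 V → ℝ) (H : V → ℝ) (ω : GConfig E) :
    fkWeight J H E ω = 2 ^ kGhost E ω * bernoulliWeight J H ω :=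
  mul_assoc _ _ _

lemma esWeight_eq (J : Sym2 V → ℝ) (H : V → ℝ) (σ : V → Bool) (ω : GConfig E) :
    esWeight J H E (σ, ω) = if Compatible ω σ then bernoulliWeight J H ω else 0 := by
  simp only [esWeight, Fintype.prod_ite_ite_zero, ite_zero_mul_ite_zero, forall_open_edge_iff]
  exact if_congr Iff.rfl rfl rfl

lemma sum_esWeight_mul (J : Sym2 V → ℝ) (H : V → ℝ) (ω : GConfig E) (g : (V → Bool) → ℝ) :
    ∑ σ, esWeight J H E (σ, ω) * g σ = bernoulliWeight J H ω * ∑ σ ∈ compatSpins ω, g σ := by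
  simp only [esWeight_eq, ite_mul, zero_mul]
  rw [← sum_filter, mul_sum]
  rfl

lemma sum_esWeight_spins (J : Sym2 V → ℝ) (H : V → ℝ) (ω : GConfig E) :
    ∑ σ, esWeight J H E (σ, ω) = fkWeight J H E ω := by
  simpa [card_compatSpins, fkWeight_eq, mul_comm] using sum_esWeight_mul J H ω fun _ => 1

lemma fkWeight_mul_exp_le [Nonempty V] {J : Sym2 V → ℝ} (hJ : ∀ e ∈ E, 0 ≤ J e)
    {H : V → ℝ} (hH : ∀ v, 0 ≤ H v) {t : ℝ} (ht : 0 ≤ t) (ω : GConfig E) :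
    fkWeight J H E ω * exp (t * (((clusters E ω.1).sup card : ℕ) : ℝ)) ≤
      2 * ∑ σ, esWeight J H E (σ, ω) * exp (t * ∑ v, spin (σ v)) := by
  obtain ⟨C, hC, hsup⟩ := exists_mem_eq_sup (clusters E ω.1) (univ_nonempty.image _) card
  obtain ⟨v₀, -, rfl⟩ := mem_image.1 hC
  have hW := bernoulliWeight_nonneg hJ hH ω
  have hcard : (2 : ℝ) ^ kGhost E ω ≤ 2 * #(plusSpins ω (cluster E ω.1 v₀)) := by
    exact_mod_cast pow_kGhost_le_two_mul_card_plusSpins ω v₀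
  rw [hsup, fkWeight_eq, sum_esWeight_mul]
  calc 2 ^ kGhost E ω * bernoulliWeight J H ω * exp (t * #(cluster E ω.1 v₀))
      ≤ 2 * (bernoulliWeight J H ω *
          (#(plusSpins ω (cluster E ω.1 v₀)) * exp (t * #(cluster E ω.1 v₀)))) := by
        grw [hcard]
        exact le_of_eq (by ring)
    _ ≤ 2 * (bernoulliWeight J H ω *
          ∑ σ ∈ plusSpins ω (cluster E ω.1 v₀), exp (t * ∑ v, spin (σ v))) := by
        gcongr
        exact card_mul_exp_le_sum_exp_plusSpins ω v₀ ht
    _ ≤ 2 * (bernoulliWeight J H ω * ∑ σ ∈ compatSpins ω, exp (t * ∑ v, spin (σ v))) := by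
        gcongr
        exact filter_subset _ _

end Weights

section Ising

lemma spin_not (b : Bool) : spin (!b) = -spin b := by
  cases b <;> norm_num [spin]

lemma pairSpin_not (σ : V → Bool) : pairSpin (fun v => !σ v) = pairSpin σ := by
  funext z
  induction z using Sym2.ind with
  | _ a b => simp [pairSpin, spin_not]

lemma ite_one_sub_exp_add_exp (p : Prop) [Decidable p] (c : ℝ) :
    (if p then 1 - exp (-2 * c) else 0) + exp (-2 * c) = exp (c * (if p then 1 else -1) - c) := by
  split_ifs <;> ring_nf
  simp

variable [Fintype V]

lemma isingWeight_const_field (J : Sym2 V → ℝ) (h : ℝ) (σ : V → Bool) :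
    isingWeight J (fun _ => h) E σ =
      isingWeight J (fun _ => 0) E σ * exp (h * ∑ v, spin (σ v)) := by
  rw [isingWeight, isingWeight, ← exp_add, mul_sum]
  simp

lemma isingWeight_zero_field_not (J : Sym2 V → ℝ) (σ : V → Bool) :
    isingWeight J (fun _ => 0) E (fun v => !σ v) = isingWeight J (fun _ => 0) E σ := by
  simp [isingWeight, pairSpin_not]

variable [DecidableEq V]

lemma pairSpin_eq_ite (σ : V → Bool) (z : Sym2 V) :
    pairSpin σ z = if ∀ u ∈ z, ∀ v ∈ z, σ u = σ v then 1 else -1 := by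
  induction z using Sym2.ind with
  | _ a b =>
    have hmem : (∀ u ∈ s(a, b), ∀ v ∈ s(a, b), σ u = σ v) ↔ σ a = σ b := by
      refine ⟨fun h => h a (Sym2.mem_mk_left a b) b (Sym2.mem_mk_right a b), ?_⟩
      intro h u hu v hv
      rcases Sym2.mem_iff.1 hu with rfl | rfl <;> rcases Sym2.mem_iff.1 hv with rfl | rfl <;>
        simp [h]
    rw [if_congr hmem rfl rfl]
    cases ha : σ a <;> cases hb : σ b <;> simp [pairSpin, spin, ha, hb]

lemma sum_esWeight_bonds (J : Sym2 V → ℝ) (H : V → ℝ) (σ : V → Bool) :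
    ∑ ω : GConfig E, esWeight J H E (σ, ω) =
      exp (-(∑ e ∈ E, J e) - ∑ v, H v) * isingWeight J H E σ := by
  let A : Config E → ℝ := fun ωi => ∏ e, if ωi e then
    (if ∀ u ∈ e.1, ∀ v ∈ e.1, σ u = σ v then 1 - exp (-2 * J e.1) else 0) else exp (-2 * J e.1)
  let B : (V → Bool) → ℝ := fun ωg => ∏ v, if ωg v then
    (if σ v = true then 1 - exp (-2 * H v) else 0) else exp (-2 * H v)
  calc ∑ ω : GConfig E, esWeight J H E (σ, ω) = (∑ ωi, A ωi) * ∑ ωg, B ωg := by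
        rw [Fintype.sum_mul_sum, ← Fintype.sum_prod_type']
        rfl
    _ = exp (∑ e : {e // e ∈ E}, (J e * pairSpin σ e - J e)) *
          exp (∑ v, (H v * spin (σ v) - H v)) := by
        simp only [A, B, Fintype.sum_prod_ite_bool, ite_one_sub_exp_add_exp, ← pairSpin_eq_ite,
          exp_sum]
        rfl
    _ = _ := by
        rw [sum_coe_sort E fun e => J e * pairSpin σ e - J e, isingWeight, ← exp_add, ← exp_add,
          sum_sub_distrib, sum_sub_distrib]
        ring_nf

lemma sum_isingWeight_zero_field_le (J : Sym2 V → ℝ) (h : ℝ) :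
    ∑ σ, isingWeight J (fun _ => 0) E σ ≤ ∑ σ, isingWeight J (fun _ => h) E σ := by
  simp only [isingWeight_const_field J h]
  simpa using sum_mul_exp_le_of_involution (s := univ) (c := 0) (fun σ v => !σ v)
    (w := fun σ => isingWeight J (fun _ => 0) E σ)
    (fun _ _ => mem_univ _) (fun σ _ => by simp) (fun σ _ => (exp_pos _).le)
    (fun σ _ => isingWeight_zero_field_not J σ)
    (g := fun σ => h * ∑ v, spin (σ v)) (fun σ _ => by simp [spin_not])

lemma sum_isingProb_const_field_mul_exp_le (J : Sym2 V → ℝ) (h t : ℝ) :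
    ∑ σ, isingProb J (fun _ => h) E σ * exp (t * ∑ v, spin (σ v)) ≤
      ∑ σ, isingProb J (fun _ => 0) E σ * exp ((t + h) * ∑ v, spin (σ v)) := by
  have hnum : ∑ σ, isingWeight J (fun _ => h) E σ * exp (t * ∑ v, spin (σ v)) =
      ∑ σ, isingWeight J (fun _ => 0) E σ * exp ((t + h) * ∑ v, spin (σ v)) :=
    sum_congr rfl fun σ _ => by
      rw [isingWeight_const_field, mul_assoc, ← exp_add, add_mul, add_comm]
  simp only [isingProb, div_mul_eq_mul_div, ← sum_div, hnum]
  exact div_le_div_of_nonneg_left (sum_nonneg fun _ _ => (mul_pos (exp_pos _) (exp_pos _)).le)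
    (sum_pos (fun _ _ => exp_pos _) univ_nonempty) (sum_isingWeight_zero_field_le J h)

theorem sum_fkMarginal_mul_exp_sup_card_le [Nonempty V] {J : Sym2 V → ℝ}
    (hJ : ∀ e ∈ E, 0 ≤ J e) {H : V → ℝ} (hH : ∀ v, 0 ≤ H v) {t : ℝ} (ht : 0 ≤ t) :
    ∑ ωi : Config E, fkMarginal J H E ωi * exp (t * (((clusters E ωi).sup card : ℕ) : ℝ)) ≤
      2 * ∑ σ, isingProb J H E σ * exp (t * ∑ v, spin (σ v)) := by
  have hZpos : 0 < ∑ σ, isingWeight J H E σ := sum_pos (fun _ _ => exp_pos _) univ_nonempty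
  have hZ : ∑ ω, fkWeight J H E ω =
      exp (-(∑ e ∈ E, J e) - ∑ v, H v) * ∑ σ, isingWeight J H E σ :=
    calc ∑ ω, fkWeight J H E ω = ∑ ω : GConfig E, ∑ σ, esWeight J H E (σ, ω) := by
          simp only [sum_esWeight_spins]
      _ = ∑ σ, ∑ ω : GConfig E, esWeight J H E (σ, ω) := sum_comm
      _ = _ := by simp only [mul_sum, sum_esWeight_bonds]
  have hLHS : ∑ ωi : Config E,
      fkMarginal J H E ωi * exp (t * (((clusters E ωi).sup card : ℕ) : ℝ)) =
      (∑ ω : GConfig E, fkWeight J H E ω * exp (t * (((clusters E ω.1).sup card : ℕ) : ℝ))) /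
        ∑ ω, fkWeight J H E ω := by
    simp only [fkMarginal, fkProb, sum_mul, Fintype.sum_prod_type, sum_div, div_mul_eq_mul_div]
  rw [hLHS, hZ, div_le_iff₀ (mul_pos (exp_pos _) hZpos)]
  calc ∑ ω : GConfig E, fkWeight J H E ω * exp (t * (((clusters E ω.1).sup card : ℕ) : ℝ))
      ≤ ∑ ω : GConfig E, 2 * ∑ σ, esWeight J H E (σ, ω) * exp (t * ∑ v, spin (σ v)) :=
        sum_le_sum fun ω _ => fkWeight_mul_exp_le hJ hH ht ω
    _ = 2 * ∑ σ, (∑ ω : GConfig E, esWeight J H E (σ, ω)) * exp (t * ∑ v, spin (σ v)) := by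
        rw [← mul_sum, sum_comm]
        simp only [sum_mul]
    _ = _ := by
        rw [mul_assoc, sum_mul]
        congr 1
        refine sum_congr rfl fun σ _ => ?_
        rw [sum_esWeight_bonds, isingProb]
        field_simp

end Ising

end FK

theorem mgf_largest_cluster_with_field_general
    {V : Type*} [Fintype V] [DecidableEq V] [Nonempty V]
    (E : Finset (Sym2 V))
    (J : Sym2 V → ℝ) (hJ : ∀ e ∈ E, 0 ≤ J e)
    (h : ℝ) (hh : 0 ≤ h) (t : ℝ) (ht : 0 ≤ t) :
    (∑ ωi : FK.Config E, FK.fkMarginal J (fun _ => h) E ωi *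
        Real.exp (t * (((FK.clusters E ωi).sup Finset.card : ℕ) : ℝ)))
      ≤ 2 * ∑ σ : V → Bool, FK.isingProb J (fun _ => 0) E σ *
            Real.exp ((t + h) * ∑ v, FK.spin (σ v)) :=
  (FK.sum_fkMarginal_mul_exp_sup_card_le hJ (fun _ => hh) ht).trans
    (mul_le_mul_of_nonneg_left (FK.sum_isingProb_const_field_mul_exp_le J h t) zero_le_two)

/-- moment generating function bound for the largest cluster
in a constant magnetic field `h ≥ 0`. -/
theorem mgf_largest_cluster_with_field
    {V : Type*} [Fintype V] [DecidableEq V] [Nonempty V]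
    (E : Finset (Sym2 V)) (hE : ∀ e ∈ E, ¬ e.IsDiag)
    (J : Sym2 V → ℝ) (hJ : ∀ e ∈ E, 0 ≤ J e)
    (h : ℝ) (hh : 0 ≤ h) (t : ℝ) (ht : 0 ≤ t) :
    (∑ ωi : FK.Config E, FK.fkMarginal J (fun _ => h) E ωi *
        Real.exp (t * (((FK.clusters E ωi).sup Finset.card : ℕ) : ℝ)))
      ≤ 2 * ∑ σ : V → Bool, FK.isingProb J (fun _ => 0) E σ *
            Real.exp ((t + h) * ∑ v, FK.spin (σ v)) :=
  mgf_largest_cluster_with_field_general E J hJ h hh t ht
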